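/- Consider the CTRS R over constants a, b, unary symbol g, and binary symbol f, with rules g(x) → f(x,x) and (g(x) → g(x) ⇐ g(x) → f(a,b)) under the reachability semantics. Then the condition g(x) →* f(a,b) is infeasible: there is no term t such that g(t) →*_R f(a,b). -/

import Mathlib

/-- Terms over the signature with constants `a`, `b`, unary symbol `g` and binary
symbol `f`. -/
inductive Tm where
  | a | b
  | g (t : Tm)
  | f (t₁ t₂ : Tm)

mutual
  /-- The one-step rewrite relation of the CTRS with rules `g(x) → f(x,x)` and
  `g(x) → g(x) ⇐ g(x) → f(a,b)` under the reachability semantics: rule instances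
  (whose conditions hold w.r.t. `Rews`) closed under contexts. -/
  inductive Rew : Tm → Tm → Prop where
    | rule1 (x : Tm) : Rew (.g x) (.f x x)
    | rule2 (x : Tm) : Rews (.g x) (.f .a .b) → Rew (.g x) (.g x)
    | g_congr {t t'} : Rew t t' → Rew (.g t) (.g t')
    | f_congr_l {t t'} (u : Tm) : Rew t t' → Rew (.f t u) (.f t' u)
    | f_congr_r (u : Tm) {t t'} : Rew t t' → Rew (.f u t) (.f u t')

  /-- The many-step rewrite relation: reflexive and closed under prepending
  one-step rewrites. -/
  inductive Rews : Tm → Tm → Prop where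
    | refl (t : Tm) : Rews t t
    | step {s u t : Tm} : Rew s u → Rews u t → Rews s t
end


/-! Every rewrite step is an equation of the theory `g(x) = f(x,x)`, and unfolding each `g(x)`
into `f(x,x)` is a normal form for that theory which is invariant under `→*`. It sends `g(t)` to
a term whose two arguments coincide, and `f(a,b)` to itself, whose arguments differ. -/

namespace Tm

def unfoldG : Tm → Tm
  | a => a
  | b => b
  | g t => f t.unfoldG t.unfoldG
  | f t₁ t₂ => f t₁.unfoldG t₂.unfoldG

end Tm

theorem Rew.unfoldG_eq {s t : Tm} : Rew s t → s.unfoldG = t.unfoldG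
  | rule1 _ | rule2 _ _ => rfl
  | g_congr h => by simp only [Tm.unfoldG, h.unfoldG_eq]
  | f_congr_l _ h | f_congr_r _ h => by simp only [Tm.unfoldG, h.unfoldG_eq]

theorem Rews.unfoldG_eq {s t : Tm} : Rews s t → s.unfoldG = t.unfoldG
  | refl _ => rfl
  | step h₁ h₂ => h₁.unfoldG_eq.trans h₂.unfoldG_eq

/-- The condition `g(x) →* f(a,b)` of the conditional critical pair is infeasible:
there is no term `t` such that `g(t) →*_R f(a,b)`. -/
theorem condition_infeasible : ¬ ∃ t : Tm, Rews (.g t) (.f .a .b) := by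
  rintro ⟨t, h⟩
  obtain ⟨hta, htb⟩ := Tm.f.inj h.unfoldG_eq
  exact Tm.noConfusion (hta.symm.trans htb)
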